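/- Let α ∈ (0,1), let f satisfy assumption A1 with constant λ ≥ 0, and let the temporal mesh satisfy λ τ_j^α < 1/Γ(2−α) for all j = 1,…,M. Then for every u₀ ∈ ℝ there exists exactly one real sequence (U^m)_{m=0}^M with U⁰ = u₀ and δ_t^α U^m + f(t_m, U^m) = 0 for all m = 1,…,M. -/

import Mathlib

/-!
Only the last increment `U^m - U^{m-1}` of `δ_t^α U^m` involves `U^m`, with weight
`τ_m^{-α} / Γ(2-α)`, so level `m` of the scheme is a scalar equation `c x + f(t_m, x) = r`
whose right side depends on `U^0, …, U^{m-1}` only. The mesh condition gives `c > λ`, and then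
`x ↦ c x + f(t_m, x)` is continuous and grows at least like `(c - λ) x`, hence a bijection of `ℝ`.
Existence and uniqueness follow level by level.
-/

open Real MeasureTheory

/-- The L1 discrete Caputo operator of order `α` on the temporal mesh `t`. -/
noncomputable def deltaL1 (α : ℝ) (t : ℕ → ℝ) (V : ℕ → ℝ) (m : ℕ) : ℝ :=
  (1 / Real.Gamma (1 - α)) *
    ∑ j ∈ Finset.Icc 1 m,
      ((V j - V (j - 1)) / (t j - t (j - 1))) *
        ∫ s in (t (j - 1))..(t j), (t m - s) ^ (-α)

open Filter Function

lemma bijective_of_continuous_of_le_sub {h : ℝ → ℝ} {κ : ℝ} (hκ : 0 < κ) (hc : Continuous h)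
    (hh : ∀ x y, y ≤ x → κ * (x - y) ≤ h x - h y) : Bijective h := by
  have hmono : StrictMono h := fun y x hyx => by nlinarith [hh x y hyx.le]
  have htop : Tendsto h atTop atTop := by
    refine tendsto_atTop_mono' _ ?_ (tendsto_atTop_add_const_left _ (h 0)
      (tendsto_id.const_mul_atTop hκ))
    filter_upwards [eventually_ge_atTop 0] with x hx
    simp only [id]; linarith [hh x 0 hx]
  have hbot : Tendsto h atBot atBot := by
    refine tendsto_atBot_mono' _ ?_ (tendsto_atBot_add_const_left _ (h 0)
      (tendsto_id.const_mul_atBot hκ))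
    filter_upwards [eventually_le_atBot 0] with x hx
    simp only [id]; linarith [hh 0 x hx]
  exact ⟨hmono.injective, hc.surjective htop hbot⟩

lemma bijective_mul_add_of_sub_ge {g : ℝ → ℝ} {lam c : ℝ} (hg : Continuous g)
    (hA : ∀ x y, y ≤ x → g x - g y ≥ -lam * (x - y)) (hc : lam < c) :
    Bijective fun x => c * x + g x :=
  bijective_of_continuous_of_le_sub (sub_pos.2 hc) (by fun_prop) fun x y hxy => by
    nlinarith [hA x y hxy]

/-- The coefficient of `V m` in `deltaL1 α t V m` when `τ = t m - t (m - 1)`. -/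
noncomputable def l1LeadingCoeff (α τ : ℝ) : ℝ :=
  τ ^ (-α) / Gamma (2 - α)

lemma lt_l1LeadingCoeff {α lam τ : ℝ} (hτ : 0 < τ)
    (hmesh : lam * τ ^ α < 1 / Gamma (2 - α)) : lam < l1LeadingCoeff α τ := by
  calc lam < 1 / Gamma (2 - α) / τ ^ α := (lt_div_iff₀ (rpow_pos_of_pos hτ α)).2 hmesh
    _ = l1LeadingCoeff α τ := by rw [l1LeadingCoeff, rpow_neg hτ.le]; ring

lemma integral_sub_rpow_neg {α : ℝ} (hα : α < 1) (a b : ℝ) :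
    ∫ s in a..b, (b - s) ^ (-α) = (b - a) ^ (1 - α) / (1 - α) := by
  rw [intervalIntegral.integral_comp_sub_left (fun u => u ^ (-α)) b,
    integral_rpow (Or.inl (by linarith)), sub_self, zero_rpow (by linarith), sub_zero,
    neg_add_eq_sub]

lemma one_div_Gamma_mul_integral_div {α a b : ℝ} (hα : α < 1) (hab : a < b) :
    1 / Gamma (1 - α) * ((∫ s in a..b, (b - s) ^ (-α)) / (b - a)) =
      l1LeadingCoeff α (b - a) := by
  have hba : 0 < b - a := sub_pos.2 hab
  have hΓ : 0 < Gamma (1 - α) := Gamma_pos_of_pos (by linarith)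
  rw [integral_sub_rpow_neg hα, l1LeadingCoeff, show 2 - α = (1 - α) + 1 by ring,
    Gamma_add_one (by linarith), show 1 - α = -α + 1 by ring, rpow_add hba, rpow_one]
  field_simp

lemma deltaL1_congr {α : ℝ} {t V W : ℕ → ℝ} {m : ℕ} (h : ∀ k ≤ m, V k = W k) :
    deltaL1 α t V m = deltaL1 α t W m := by
  unfold deltaL1
  congr 1
  refine Finset.sum_congr rfl fun j hj => ?_
  rw [Finset.mem_Icc] at hj
  rw [h j hj.2, h (j - 1) (by omega)]

lemma deltaL1_update_succ {α : ℝ} (hα : α < 1) {t : ℕ → ℝ} {n : ℕ} (hτ : t n < t (n + 1))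
    (V : ℕ → ℝ) (x : ℝ) :
    deltaL1 α t (update V (n + 1) x) (n + 1) =
      deltaL1 α t V (n + 1) + l1LeadingCoeff α (t (n + 1) - t n) * (x - V (n + 1)) := by
  have hhist : ∀ j ∈ Finset.Icc 1 n, update V (n + 1) x j = V j ∧
      update V (n + 1) x (j - 1) = V (j - 1) := fun j hj => by
    rw [Finset.mem_Icc] at hj
    exact ⟨update_of_ne (by omega) _ _, update_of_ne (by omega) _ _⟩
  rw [← one_div_Gamma_mul_integral_div hα hτ]
  unfold deltaL1
  rw [Finset.sum_Icc_succ_top (by omega), Finset.sum_Icc_succ_top (by omega),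
    Finset.sum_congr rfl fun j hj => by rw [(hhist j hj).1, (hhist j hj).2],
    update_self, Nat.add_sub_cancel, update_of_ne (by omega)]
  ring

def IsL1Solution (α : ℝ) (t : ℕ → ℝ) (f : ℝ → ℝ → ℝ) (u₀ : ℝ) (N : ℕ) (U : ℕ → ℝ) : Prop :=
  U 0 = u₀ ∧ ∀ m, 1 ≤ m → m ≤ N → deltaL1 α t U m + f (t m) (U m) = 0

section Solvability

variable {α : ℝ} {t : ℕ → ℝ} {f : ℝ → ℝ → ℝ} {u₀ : ℝ} {N : ℕ}

/-- Inverting this map advances the scheme from level `n` to level `n + 1`. -/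
noncomputable def l1StepMap (α : ℝ) (t : ℕ → ℝ) (f : ℝ → ℝ → ℝ) (n : ℕ) (x : ℝ) : ℝ :=
  l1LeadingCoeff α (t (n + 1) - t n) * x + f (t (n + 1)) x

theorem exists_isL1Solution (hα : α < 1) (hτ : ∀ n < N, t n < t (n + 1))
    (hstep : ∀ n < N, Surjective (l1StepMap α t f n)) :
    ∃ U, IsL1Solution α t f u₀ N U := by
  induction N with
  | zero => exact ⟨fun _ => u₀, rfl, fun m h1 h2 => by omega⟩
  | succ N ih =>
    obtain ⟨U, hU0, hU⟩ := ih (fun n hn => hτ n (by omega)) fun n hn => hstep n (by omega)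
    obtain ⟨x, hx⟩ := hstep N N.lt_succ_self
      (l1LeadingCoeff α (t (N + 1) - t N) * U (N + 1) - deltaL1 α t U (N + 1))
    refine ⟨update U (N + 1) x, by rwa [update_of_ne (by omega)], fun m h1 h2 => ?_⟩
    rcases Nat.lt_or_ge m (N + 1) with hm | hm
    · have hagree : ∀ k ≤ m, update U (N + 1) x k = U k := fun k hk =>
        update_of_ne (by omega) _ _
      rw [deltaL1_congr hagree, hagree m le_rfl]
      exact hU m h1 (by omega)
    · obtain rfl : m = N + 1 := by omega
      rw [deltaL1_update_succ hα (hτ N N.lt_succ_self), update_self]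
      simp only [l1StepMap] at hx
      linarith

theorem IsL1Solution.eq (hα : α < 1) (hτ : ∀ n < N, t n < t (n + 1))
    (hstep : ∀ n < N, Injective (l1StepMap α t f n)) {U U' : ℕ → ℝ}
    (hU : IsL1Solution α t f u₀ N U) (hU' : IsL1Solution α t f u₀ N U') :
    ∀ m ≤ N, U' m = U m := by
  suffices h : ∀ m ≤ N, ∀ k ≤ m, U' k = U k from fun m hm => h m hm m le_rfl
  intro m
  induction m with
  | zero =>
    intro _ k hk
    obtain rfl : k = 0 := by omega
    exact hU'.1.trans hU.1.symm
  | succ n ih =>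
    intro hn k hk
    have hprev := ih (by omega)
    rcases Nat.lt_or_ge k (n + 1) with hlt | hge
    · exact hprev k (by omega)
    obtain rfl : k = n + 1 := by omega
    have hδ : deltaL1 α t U' (n + 1) = deltaL1 α t (update U (n + 1) (U' (n + 1))) (n + 1) :=
      deltaL1_congr fun k hk => by
        rcases Nat.lt_or_ge k (n + 1) with hlt | hge
        · rw [update_of_ne (by omega), hprev k (by omega)]
        · obtain rfl : k = n + 1 := by omega
          rw [update_self]
    rw [deltaL1_update_succ hα (hτ n hn)] at hδ
    refine hstep n hn ?_
    have := hU.2 (n + 1) (by omega) hn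
    have := hU'.2 (n + 1) (by omega) hn
    simp only [l1StepMap]
    linarith

end Solvability

theorem stmt2_general
    (α lam : ℝ) (hα : α ∈ Set.Ioo (0 : ℝ) 1)
    (f : ℝ → ℝ → ℝ)
    (hfc : ∀ t', Continuous fun s => f t' s)
    (hfA1 : ∀ t' s₁ s₂, s₂ ≤ s₁ → f t' s₁ - f t' s₂ ≥ -lam * (s₁ - s₂))
    (M : ℕ) (t : ℕ → ℝ)
    (hmono : ∀ j, j < M → t j < t (j + 1))
    (hmesh : ∀ j, 1 ≤ j → j ≤ M →
      lam * (t j - t (j - 1)) ^ α < 1 / Real.Gamma (2 - α))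
    (u₀ : ℝ) :
    ∃ U : ℕ → ℝ,
      (U 0 = u₀ ∧ ∀ m, 1 ≤ m → m ≤ M → deltaL1 α t U m + f (t m) (U m) = 0) ∧
      ∀ U' : ℕ → ℝ,
        (U' 0 = u₀ ∧ ∀ m, 1 ≤ m → m ≤ M → deltaL1 α t U' m + f (t m) (U' m) = 0) →
        ∀ m, m ≤ M → U' m = U m := by
  have hstep : ∀ n < M, Bijective (l1StepMap α t f n) := fun n hn =>
    bijective_mul_add_of_sub_ge (hfc _) (hfA1 _)
      (lt_l1LeadingCoeff (sub_pos.2 (hmono n hn)) (hmesh (n + 1) n.succ_pos hn))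
  obtain ⟨U, hU⟩ := exists_isL1Solution (u₀ := u₀) hα.2 hmono fun n hn => (hstep n hn).2
  exact ⟨U, hU, fun U' hU' => hU.eq hα.2 hmono (fun n hn => (hstep n hn).1) hU'⟩

theorem stmt2
    (α T lam : ℝ) (hα : α ∈ Set.Ioo (0 : ℝ) 1) (hT : 0 < T) (hlam : 0 ≤ lam)
    (f : ℝ → ℝ → ℝ)
    (hfc : ∀ t', Continuous fun s => f t' s)
    (hfA1 : ∀ t' s₁ s₂, s₂ ≤ s₁ → f t' s₁ - f t' s₂ ≥ -lam * (s₁ - s₂))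
    (M : ℕ) (hM : 1 ≤ M) (t : ℕ → ℝ)
    (ht0 : t 0 = 0) (htM : t M = T)
    (hmono : ∀ j, j < M → t j < t (j + 1))
    (hmesh : ∀ j, 1 ≤ j → j ≤ M →
      lam * (t j - t (j - 1)) ^ α < 1 / Real.Gamma (2 - α))
    (u₀ : ℝ) :
    ∃ U : ℕ → ℝ,
      (U 0 = u₀ ∧ ∀ m, 1 ≤ m → m ≤ M → deltaL1 α t U m + f (t m) (U m) = 0) ∧
      ∀ U' : ℕ → ℝ,
        (U' 0 = u₀ ∧ ∀ m, 1 ≤ m → m ≤ M → deltaL1 α t U' m + f (t m) (U' m) = 0) →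
        ∀ m, m ≤ M → U' m = U m :=
  stmt2_general α lam hα f hfc hfA1 M t hmono hmesh u₀
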